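/- (De Moivre's mean absolute deviation formula) For a binomial random variable X ~ Bin(T,p), E[|X - Tp|] = 2⌈Tp⌉(1-p)·Pr[X = ⌈Tp⌉] = 2·C(T,⌈Tp⌉)·⌈Tp⌉·p^⌈Tp⌉·(1-p)^(T-⌈Tp⌉+1). -/

import Mathlib

/-- Probability mass function of the binomial distribution `Bin(T, p)` at `k`. -/
noncomputable def binomPMF (T : ℕ) (p : ℝ) (k : ℕ) : ℝ :=
  (T.choose k : ℝ) * p ^ k * (1 - p) ^ (T - k)

/-- PMF of the independent sum `Bin(T-1, p) + Bern(q)` at `k`. -/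
noncomputable def binBernConvPMF (T : ℕ) (p q : ℝ) (k : ℕ) : ℝ :=
  (1 - q) * binomPMF (T - 1) p k +
    q * (if k = 0 then 0 else binomPMF (T - 1) p (k - 1))

/-- Total variation distance between two probability distributions on ℕ. -/
noncomputable def tvDist (f g : ℕ → ℝ) : ℝ := (1 / 2) * ∑' k, |f k - g k|

/-- Mean absolute deviation of `X ~ Bin(T, p)` from its mean `Tp`. -/
noncomputable def binomMAD (T : ℕ) (p : ℝ) : ℝ :=
  ∑ k ∈ Finset.range (T + 1), binomPMF T p k * |(k : ℝ) - (T : ℝ) * p|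

/-!
Write `μ = Tp` and `T = n + 1`. Since the deviations `k - μ` have mean zero, the mean absolute
deviation is twice the upper tail `∑_{k ≥ ⌈μ⌉} Pr[X = k] (k - μ)`. The identities
`k·C(n+1,k) = (n+1)·C(n,k-1)` and Pascal's rule turn each term of that tail into
`μ(1-p)(b(k-1) - b(k))` with `b` the `Bin(n, p)` mass function, so the tail telescopes to
`μ(1-p)·b(⌈μ⌉-1) = ⌈μ⌉(1-p)·Pr[X = ⌈μ⌉]`.
-/

open Finset

lemma binomPMF_eq_zero_of_lt {n k : ℕ} (p : ℝ) (h : n < k) : binomPMF n p k = 0 := by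
  simp [binomPMF, Nat.choose_eq_zero_of_lt h]

lemma succ_mul_binomPMF_succ (n k : ℕ) (p : ℝ) :
    ((k : ℝ) + 1) * binomPMF (n + 1) p (k + 1) = ((n : ℝ) + 1) * p * binomPMF n p k := by
  have h : ((n : ℝ) + 1) * n.choose k = (n + 1).choose (k + 1) * ((k : ℝ) + 1) := by
    exact_mod_cast Nat.add_one_mul_choose_eq n k
  simp only [binomPMF, Nat.add_sub_add_right, pow_succ]
  linear_combination (p ^ k * p * (1 - p) ^ (n - k)) * h.symm

lemma binomPMF_succ_succ (n k : ℕ) (p : ℝ) :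
    binomPMF (n + 1) p (k + 1) = p * binomPMF n p k + (1 - p) * binomPMF n p (k + 1) := by
  rcases lt_or_ge k n with h | h
  · have hsub : n - k = n - (k + 1) + 1 := by omega
    simp only [binomPMF, Nat.add_sub_add_right, Nat.choose_succ_succ, hsub, pow_succ]
    push_cast
    ring
  · have hsub : n - k = 0 := by omega
    simp only [binomPMF, Nat.add_sub_add_right, Nat.choose_succ_succ, hsub,
      Nat.choose_eq_zero_of_lt (show n < k + 1 by omega), pow_succ]
    push_cast
    ring

lemma binomPMF_succ_mul_sub_mean (n k : ℕ) (p : ℝ) :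
    binomPMF (n + 1) p (k + 1) * ((k : ℝ) + 1 - ((n : ℝ) + 1) * p) =
      ((n : ℝ) + 1) * p * (1 - p) * (binomPMF n p k - binomPMF n p (k + 1)) := by
  linear_combination succ_mul_binomPMF_succ n k p - ((n : ℝ) + 1) * p * binomPMF_succ_succ n k p

lemma sum_Ico_binomPMF_mul_sub_mean (n m : ℕ) (p : ℝ) :
    ∑ k ∈ Ico (m + 1) (n + 2), binomPMF (n + 1) p k * ((k : ℝ) - ((n : ℝ) + 1) * p) =
      ((n : ℝ) + 1) * p * (1 - p) * binomPMF n p m := by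
  rcases le_or_gt m (n + 1) with hm | hm
  · rw [← sum_Ico_add' _ m (n + 1) 1]
    simp_rw [Nat.cast_add_one, binomPMF_succ_mul_sub_mean, ← mul_sum]
    have htelescope := sum_Ico_sub (fun k => -binomPMF n p k) hm
    simp only [sub_neg_eq_add, neg_add_eq_sub] at htelescope
    rw [htelescope, binomPMF_eq_zero_of_lt p n.lt_succ_self, sub_zero]
  · rw [Ico_eq_empty_of_le (by omega), sum_empty, binomPMF_eq_zero_of_lt p (by omega), mul_zero]

lemma sum_binomPMF_mul_sub_mean (n : ℕ) (p : ℝ) :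
    ∑ k ∈ range (n + 1), binomPMF n p k * ((k : ℝ) - n * p) = 0 := by
  cases n with
  | zero => simp
  | succ n =>
    rw [range_eq_Ico, sum_eq_sum_Ico_succ_bot (by omega), Nat.cast_add_one,
      sum_Ico_binomPMF_mul_sub_mean n 0 p]
    simp only [binomPMF, Nat.choose_zero_right, Nat.cast_one, pow_zero, mul_one, tsub_zero, one_mul,
      CharP.cast_eq_zero, zero_sub, mul_neg]
    ring

lemma sum_mul_abs_sub_eq_two_mul_sum_Ico_ceil (w : ℕ → ℝ) (μ : ℝ) {N : ℕ} (hN : ⌈μ⌉₊ ≤ N)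
    (h : ∑ k ∈ range N, w k * ((k : ℝ) - μ) = 0) :
    ∑ k ∈ range N, w k * |(k : ℝ) - μ| = 2 * ∑ k ∈ Ico ⌈μ⌉₊ N, w k * ((k : ℝ) - μ) := by
  rw [← sum_range_add_sum_Ico _ hN] at h ⊢
  have hlow : ∀ k ∈ range ⌈μ⌉₊, w k * |(k : ℝ) - μ| = -(w k * ((k : ℝ) - μ)) := by
    intro k hk
    rw [abs_of_neg (sub_neg.mpr (Nat.lt_ceil.mp (mem_range.mp hk)))]
    ring
  have hhigh : ∀ k ∈ Ico ⌈μ⌉₊ N, w k * |(k : ℝ) - μ| = w k * ((k : ℝ) - μ) := by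
    intro k hk
    rw [abs_of_nonneg (sub_nonneg.mpr (Nat.ceil_le.mp (mem_Ico.mp hk).1))]
  rw [sum_congr rfl hlow, sum_congr rfl hhigh, sum_neg_distrib]
  linarith

lemma binomMAD_eq_two_mul_ceil_mul_binomPMF (T : ℕ) (hT : 1 ≤ T) (p : ℝ) (hp0 : 0 < p)
    (hp1 : p ≤ 1) :
    binomMAD T p = 2 * (⌈(T : ℝ) * p⌉₊ : ℝ) * (1 - p) * binomPMF T p ⌈(T : ℝ) * p⌉₊ := by
  obtain ⟨n, rfl⟩ : ∃ n, T = n + 1 := ⟨T - 1, by omega⟩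
  have hceil_pos : 0 < ⌈((n + 1 : ℕ) : ℝ) * p⌉₊ := Nat.ceil_pos.mpr (by positivity)
  have hceil_le : ⌈((n + 1 : ℕ) : ℝ) * p⌉₊ ≤ n + 2 := by
    refine Nat.ceil_le.mpr ?_
    push_cast
    nlinarith
  obtain ⟨m, hm⟩ : ∃ m, ⌈((n + 1 : ℕ) : ℝ) * p⌉₊ = m + 1 :=
    ⟨_, (Nat.succ_pred_eq_of_pos hceil_pos).symm⟩
  rw [binomMAD, sum_mul_abs_sub_eq_two_mul_sum_Ico_ceil _ _ hceil_le
    (sum_binomPMF_mul_sub_mean (n + 1) p), hm]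
  push_cast
  rw [sum_Ico_binomPMF_mul_sub_mean]
  linear_combination -2 * (1 - p) * succ_mul_binomPMF_succ n m p

/-- De Moivre's formula: for `X ~ Bin(T,p)`,
`E[|X - Tp|] = 2⌈Tp⌉(1-p)·Pr[X = ⌈Tp⌉] = 2·C(T,⌈Tp⌉)·⌈Tp⌉·p^⌈Tp⌉·(1-p)^(T-⌈Tp⌉+1)`. -/
theorem stmt2 (T : ℕ) (hT : 1 ≤ T) (p : ℝ) (hp0 : 0 < p) (hp1 : p < 1) :
    binomMAD T p =
        2 * (⌈(T : ℝ) * p⌉₊ : ℝ) * (1 - p) * binomPMF T p ⌈(T : ℝ) * p⌉₊ ∧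
      binomMAD T p =
        2 * (T.choose ⌈(T : ℝ) * p⌉₊ : ℝ) * (⌈(T : ℝ) * p⌉₊ : ℝ) *
          p ^ ⌈(T : ℝ) * p⌉₊ * (1 - p) ^ (T - ⌈(T : ℝ) * p⌉₊ + 1) := by
  have hMAD := binomMAD_eq_two_mul_ceil_mul_binomPMF T hT p hp0 hp1.le
  refine ⟨hMAD, ?_⟩
  rw [hMAD, binomPMF, pow_succ]
  ring
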